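/- arXiv:2411.18340 — 2 statements merged into one kernel-verified Lean document; each statement's English description precedes it below -/
import Mathlib

section
/- Let u, r, k, l be positive integers with u > r ≥ 2, k + l ≤ r and l ≤ u - r, and set s₁ = ⌊(u-r)/l⌋, e₁ = u - r - s₁ l, s₂ = ⌊u/k⌋, e₂ = u - s₂ k. If s₁ + 2 ≤ s₂, then the partition P = ((s₂+1)^{e₂}, s₂^{k-e₂}, (s₁+1)^{e₁}, s₁^{l-e₁}) (omitting zero-multiplicity parts) is a partition of u + (u - r) with exactly k + l parts, whose conjugate is ((k+l)^{s₁}, k+e₁, k^{s₂-s₁-1}, e₂). -/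
theorem myCountP (p : ℕ → Bool) (n a : ℕ) :
    (List.replicate n a).countP p = if p a then n else 0 := by
  induction n with
  | zero => simp
  | succ n ih => simp [List.replicate_succ, List.countP_cons, ih]; split_ifs <;> simp_all

theorem myGetD (n i a d : ℕ) : (List.replicate n a).getD i d = if i < n then a else d := by
  induction n generalizing i with
  | zero => simp
  | succ n ih =>
    cases i with
    | zero => simp [List.replicate_succ]
    | succ i =>
      rw [List.replicate_succ, List.getD_cons_succ, ih]
      by_cases h : i < n <;> simp [h, Nat.succ_lt_succ_iff]

theorem myGetDApp (n a : ℕ) (rest : List ℕ) (i d : ℕ) :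
    (List.replicate n a ++ rest).getD i d = if i < n then a else rest.getD (i - n) d := by
  by_cases h : i < n
  · rw [List.getD_append _ _ _ _ (by simpa using h), myGetD]; simp [h]
  · rw [List.getD_append_right _ _ _ _ (by simpa using not_lt.mp h)]; simp [h]

theorem stmt_4 (u r k l : ℕ) (hur : r < u) (hr : 2 ≤ r)
    (hk : 1 ≤ k) (hl1 : 1 ≤ l) (hl2 : l ≤ u - r) (hkl : k + l ≤ r)
    (s₁ e₁ s₂ e₂ : ℕ)
    (hs₁ : s₁ = (u - r) / l) (he₁ : e₁ = u - r - s₁ * l)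
    (hs₂ : s₂ = u / k) (he₂ : e₂ = u - s₂ * k)
    (hsep : s₁ + 2 ≤ s₂)
    (P Q : List ℕ)
    (hP : P = List.replicate e₂ (s₂ + 1) ++ List.replicate (k - e₂) s₂ ++
              List.replicate e₁ (s₁ + 1) ++ List.replicate (l - e₁) s₁)
    (hQ : Q = List.replicate s₁ (k + l) ++ [k + e₁] ++
              List.replicate (s₂ - s₁ - 1) k ++ [e₂]) :
    P.Pairwise (· ≥ ·) ∧ (∀ x ∈ P, 0 < x) ∧ P.sum = u + (u - r) ∧ P.length = k + l ∧
      ∀ i : ℕ, Q.getD i 0 = P.countP (fun x => decide (i + 1 ≤ x)) := by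
  have hk0 : 0 < k := hk
  have h2a : s₂ * k ≤ u := by rw [hs₂]; exact Nat.div_mul_le_self u k
  have h2b : u < s₂ * k + k := by
    rw [hs₂]
    exact Nat.lt_div_mul_add hk0
  have h1a : s₁ * l ≤ u - r := by rw [hs₁]; exact Nat.div_mul_le_self _ l
  have h1b : u - r < s₁ * l + l := by
    rw [hs₁]
    exact Nat.lt_div_mul_add hl1
  have hA : s₂ * k + e₂ = u ∧ e₂ < k := by
    generalize hg : s₂ * k = A at h2a h2b he₂
    omega
  have hC : s₁ * l + e₁ = u - r ∧ e₁ < l := by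
    generalize hg : s₁ * l = A at h1a h1b he₁
    omega
  have hs1 : 1 ≤ s₁ := hs₁ ▸ (Nat.one_le_div_iff hl1).mpr hl2
  obtain ⟨hA1, hA2⟩ := hA
  obtain ⟨hC1, hC2⟩ := hC
  subst hP hQ
  refine ⟨?_, ?_, ?_, ?_, ?_⟩
  · simp only [List.append_assoc, List.pairwise_append,
      List.pairwise_replicate, List.mem_replicate, ge_iff_le]
    refine ⟨.inr le_rfl, ⟨.inr le_rfl, ⟨.inr le_rfl, .inr le_rfl, ?_⟩, ?_⟩, ?_⟩ <;>
      rintro x ⟨-, rfl⟩ y hy <;>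
        (try simp only [List.mem_append, List.mem_replicate] at hy) <;> omega
  · intro x hx
    simp only [List.append_assoc, List.mem_append, List.mem_replicate] at hx
    omega
  · simp only [List.append_assoc, List.sum_append, List.sum_replicate, smul_eq_mul]
    obtain ⟨k', rfl⟩ : ∃ k', k = e₂ + k' := ⟨k - e₂, by omega⟩
    obtain ⟨l', rfl⟩ : ∃ l', l = e₁ + l' := ⟨l - e₁, by omega⟩
    rw [Nat.add_sub_cancel_left, Nat.add_sub_cancel_left, ← hC1, ← hA1]
    ring
  · simp only [List.append_assoc, List.length_append, List.length_replicate]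
    omega
  · intro i
    simp only [List.append_assoc, show ∀ x : ℕ, [x] = List.replicate 1 x from fun _ => rfl,
      myGetDApp, myGetD, List.countP_append, myCountP, decide_eq_true_eq]
    split_ifs <;> omega
end

section
/- Let u, r, k, l, l' be positive integers with l' ≤ l, k + l' ≤ r, u > r. Set s₂ = ⌊u/k⌋, e₂ = u - s₂k, s₁ = ⌊(u-r)/l⌋, e₁ = u - r - s₁l. If s₂ = s₁ + 2 and (s₂ - 2)l' - s₂k + r ≥ 0 (i.e. L₃(s₂) ≥ L₂(s₂)), then e₂ - e₁ ≥ 0. -/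
theorem stmt_6 (u r k l l' : ℕ) (hu : 0 < u) (hr : 0 < r) (hk : 0 < k)
    (hl : 0 < l) (hl' : 0 < l') (hll : l' ≤ l) (hkl : k + l' ≤ r) (hur : r < u)
    (s₁ e₁ s₂ e₂ : ℕ)
    (hs₂ : s₂ = u / k) (he₂ : e₂ = u - s₂ * k)
    (hs₁ : s₁ = (u - r) / l) (he₁ : e₁ = u - r - s₁ * l)
    (hsep : s₂ = s₁ + 2) (hL : s₂ * k ≤ (s₂ - 2) * l' + r) :
    e₁ ≤ e₂ := by
  have h1 : s₂ * k ≤ u := by rw [hs₂]; exact Nat.div_mul_le_self u k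
  have h2 : s₁ * l ≤ u - r := by rw [hs₁]; exact Nat.div_mul_le_self _ l
  have h3 : s₁ * l' ≤ s₁ * l := Nat.mul_le_mul_left s₁ hll
  have hd : s₂ - 2 = s₁ := by omega
  rw [hd] at hL
  omega
end
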